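/- Let i, j ≥ 1 be integers, let S_n^{(L)}, S_n^{(M)}, S_n^{(R)} be three independent simple symmetric random walks started from −2i, 0, 2j built from independent i.i.d. Rademacher sequences, with pairwise distances D_n^{(L,M)} = S_n^{(M)} − S_n^{(L)}, D_n^{(M,R)} = S_n^{(R)} − S_n^{(M)}, first collision time τ_C = inf{n ≥ 1 : D_n^{(L,M)} D_n^{(M,R)} = 0}, and M_n = max{D_n^{(L,M)}, D_n^{(M,R)}}. Then E[M_{τ_C}] = 2(i + j). -/

import Mathlib

open MeasureTheory ProbabilityTheory
open scoped ENNReal Classical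

/-- Distance `D_n^{(L,M)} = S_n^{(M)} - S_n^{(L)}` between the middle walk
(started at `0`) and the left walk (started at `-2i`). -/
noncomputable def distLM {Ω : Type*} (i : ℕ) (IL IM : ℕ → Ω → ℝ) (n : ℕ) (ω : Ω) : ℝ :=
  (∑ k ∈ Finset.range n, IM k ω) - (-(2 * (i : ℝ)) + ∑ k ∈ Finset.range n, IL k ω)

/-- Distance `D_n^{(M,R)} = S_n^{(R)} - S_n^{(M)}` between the right walk
(started at `2j`) and the middle walk (started at `0`). -/
noncomputable def distMR {Ω : Type*} (j : ℕ) (IM IR : ℕ → Ω → ℝ) (n : ℕ) (ω : Ω) : ℝ :=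
  (2 * (j : ℝ) + ∑ k ∈ Finset.range n, IR k ω) - (∑ k ∈ Finset.range n, IM k ω)

/-- First collision time `τ_C = inf {n ≥ 1 : D_n^{(L,M)} D_n^{(M,R)} = 0}`,
with values in `ℕ∞` (and `inf ∅ = ∞`; it is in fact a.s. finite). -/
noncomputable def collisionTime {Ω : Type*} (i j : ℕ) (IL IM IR : ℕ → Ω → ℝ) (ω : Ω) : ℕ∞ :=
  ⨅ (n : ℕ) (_ : 1 ≤ n ∧ distLM i IL IM n ω * distMR j IM IR n ω = 0), (n : ℕ∞)

section InfNat
variable (P : ℕ → Prop)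

noncomputable def tauOf : ℕ∞ := ⨅ (n : ℕ) (_ : P n), (n : ℕ∞)

lemma tauOf_eq_top (h : ∀ n, ¬ P n) : tauOf P = ⊤ := by
  simp [tauOf, h]

lemma tauOf_eq_find (h : ∃ n, P n) : tauOf P = (Nat.find h : ℕ∞) := by
  apply le_antisymm
  · exact iInf₂_le _ (Nat.find_spec h)
  · exact le_iInf₂ fun n hn => by exact_mod_cast Nat.find_min' h hn

lemma lt_tauOf_iff (n : ℕ) : (n : ℕ∞) < tauOf P ↔ ∀ m, m ≤ n → ¬ P m := by
  constructor
  · intro h m hm hPm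
    have h1 : tauOf P ≤ (m : ℕ∞) := iInf₂_le _ hPm
    have h2 : (m : ℕ∞) ≤ (n : ℕ∞) := Nat.cast_le.mpr hm
    exact absurd (lt_of_lt_of_le (lt_of_lt_of_le h h1) h2) (lt_irrefl _)
  · intro h
    by_cases hex : ∃ m, P m
    · rw [tauOf_eq_find P hex]
      have : n < Nat.find hex := by
        by_contra hc
        exact h _ (le_of_not_gt hc) (Nat.find_spec hex)
      exact_mod_cast this
    · rw [tauOf_eq_top P (not_exists.mp hex)]
      exact lt_top_iff_ne_top.mpr (by simp)

lemma tauOf_spec (h : tauOf P ≠ ⊤) : P (tauOf P).toNat ∧ ∀ m < (tauOf P).toNat, ¬ P m := by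
  have hex : ∃ n, P n := by
    by_contra hc
    exact h (tauOf_eq_top P (not_exists.mp hc))
  rw [tauOf_eq_find P hex]
  simp only [ENat.toNat_coe]
  exact ⟨Nat.find_spec hex, fun m hm => Nat.find_min hex hm⟩
end InfNat
lemma step_even {c δ : ℝ} {p : ℕ} (hp1 : 1 ≤ p) (h : c = 2*p)
    (hδ : δ = -2 ∨ δ = 0 ∨ δ = 2) : ∃ q : ℕ, c + δ = 2*q := by
  rcases hδ with h' | h' | h'
  · exact ⟨p - 1, by subst h'; rw [h, Nat.cast_sub hp1]; ring⟩
  · exact ⟨p, by subst h'; rw [h]; ring⟩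
  · exact ⟨p + 1, by subst h'; rw [h]; push_cast; ring⟩

lemma walk_invariant_pos (i j : ℕ) (hi : 1 ≤ i) (hj : 1 ≤ j) (a b : ℕ → ℝ)
    (ha : ∀ k, a k = -2 ∨ a k = 0 ∨ a k = 2) (hb : ∀ k, b k = -2 ∨ b k = 0 ∨ b k = 2) :
    ∀ m : ℕ, (∀ l, 1 ≤ l → l ≤ m →
        (2*(i:ℝ) + ∑ k ∈ Finset.range l, a k) * (2*(j:ℝ) + ∑ k ∈ Finset.range l, b k) ≠ 0) →
      ∃ p q : ℕ, 1 ≤ p ∧ 1 ≤ q ∧ 2*(i:ℝ) + ∑ k ∈ Finset.range m, a k = 2*p ∧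
        2*(j:ℝ) + ∑ k ∈ Finset.range m, b k = 2*q := by
  intro m
  induction m with
  | zero => exact fun _ => ⟨i, j, hi, hj, by simp, by simp⟩
  | succ n ih =>
    intro h
    obtain ⟨p, q, hp1, hq1, hp, hq⟩ := ih (fun l h1 hl => h l h1 (by omega))
    obtain ⟨p', hp'⟩ := step_even hp1 hp (ha n)
    obtain ⟨q', hq'⟩ := step_even hq1 hq (hb n)
    rw [add_assoc, add_comm (2*(i:ℝ))] at hp'
    rw [add_assoc, add_comm (2*(j:ℝ))] at hq'
    have hp'' : 2*(i:ℝ) + ∑ k ∈ Finset.range (n+1), a k = 2*p' := by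
      rw [Finset.sum_range_succ]; rw [← hp']; ring
    have hq'' : 2*(j:ℝ) + ∑ k ∈ Finset.range (n+1), b k = 2*q' := by
      rw [Finset.sum_range_succ]; rw [← hq']; ring
    have hne := h (n+1) (by omega) le_rfl
    refine ⟨p', q', ?_, ?_, hp'', hq''⟩
    · by_contra hc
      have : p' = 0 := by omega
      apply hne
      rw [hp'', this]
      simp
    · by_contra hc
      have : q' = 0 := by omega
      apply hne
      rw [hq'', this]
      simp

lemma walk_nonneg_at (i j : ℕ) (hi : 1 ≤ i) (hj : 1 ≤ j) (a b : ℕ → ℝ)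
    (ha : ∀ k, a k = -2 ∨ a k = 0 ∨ a k = 2) (hb : ∀ k, b k = -2 ∨ b k = 0 ∨ b k = 2)
    (m : ℕ) (h : ∀ l, 1 ≤ l → l < m →
        (2*(i:ℝ) + ∑ k ∈ Finset.range l, a k) * (2*(j:ℝ) + ∑ k ∈ Finset.range l, b k) ≠ 0) :
    ∃ p q : ℕ, 2*(i:ℝ) + ∑ k ∈ Finset.range m, a k = 2*p ∧
      2*(j:ℝ) + ∑ k ∈ Finset.range m, b k = 2*q := by
  cases m with
  | zero => exact ⟨i, j, by simp, by simp⟩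
  | succ n =>
    obtain ⟨p, q, hp1, hq1, hp, hq⟩ :=
      walk_invariant_pos i j hi hj a b ha hb n (fun l h1 hl => h l h1 (by omega))
    obtain ⟨p', hp'⟩ := step_even hp1 hp (ha n)
    obtain ⟨q', hq'⟩ := step_even hq1 hq (hb n)
    refine ⟨p', q', ?_, ?_⟩
    · rw [Finset.sum_range_succ, ← hp']; ring
    · rw [Finset.sum_range_succ, ← hq']; ring

section Main
variable {Ω : Type*}

/-- `D^{(L,M)}` as started value plus increments. -/
noncomputable def dL (I : Fin 3 → ℕ → Ω → ℝ) (i : ℕ) (n : ℕ) (ω : Ω) : ℝ :=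
  2*(i:ℝ) + ∑ k ∈ Finset.range n, (I 1 k ω - I 0 k ω)

noncomputable def dR (I : Fin 3 → ℕ → Ω → ℝ) (j : ℕ) (n : ℕ) (ω : Ω) : ℝ :=
  2*(j:ℝ) + ∑ k ∈ Finset.range n, (I 2 k ω - I 1 k ω)

noncomputable def Wp (I : Fin 3 → ℕ → Ω → ℝ) (n : ℕ) (ω : Ω) : ℝ :=
  ∑ k ∈ Finset.range n, (I 2 k ω - I 0 k ω)

lemma distLM_eq (I : Fin 3 → ℕ → Ω → ℝ) (i n : ℕ) (ω : Ω) :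
    distLM i (I 0) (I 1) n ω = dL I i n ω := by
  simp only [distLM, dL, Finset.sum_sub_distrib]; ring

lemma distMR_eq (I : Fin 3 → ℕ → Ω → ℝ) (j n : ℕ) (ω : Ω) :
    distMR j (I 1) (I 2) n ω = dR I j n ω := by
  simp only [distMR, dR, Finset.sum_sub_distrib]; ring

lemma dL_add_dR (I : Fin 3 → ℕ → Ω → ℝ) (i j n : ℕ) (ω : Ω) :
    dL I i n ω + dR I j n ω = 2*((i:ℝ)+(j:ℝ)) + Wp I n ω := by
  simp only [dL, dR, Wp, Finset.sum_sub_distrib]; ring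

noncomputable def tauC (I : Fin 3 → ℕ → Ω → ℝ) (i j : ℕ) (ω : Ω) : ℕ∞ :=
  tauOf (fun n => 1 ≤ n ∧ dL I i n ω * dR I j n ω = 0)

lemma collisionTime_eq (I : Fin 3 → ℕ → Ω → ℝ) (i j : ℕ) (ω : Ω) :
    collisionTime i j (I 0) (I 1) (I 2) ω = tauC I i j ω := by
  unfold collisionTime tauC tauOf
  simp_rw [distLM_eq, distMR_eq]

/-- the stopped time `min (τ, n)` as a natural number. -/
noncomputable def Tst (I : Fin 3 → ℕ → Ω → ℝ) (i j : ℕ) (n : ℕ) (ω : Ω) : ℕ :=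
  (min (tauC I i j ω) n).toNat

/-- the event `n < τ`, i.e. no collision up to time `n`. -/
def Aset (I : Fin 3 → ℕ → Ω → ℝ) (i j : ℕ) (n : ℕ) : Set Ω :=
  {ω | (n:ℕ∞) < tauC I i j ω}

lemma mem_Aset_iff (I : Fin 3 → ℕ → Ω → ℝ) (i j n : ℕ) (ω : Ω) :
    ω ∈ Aset I i j n ↔ ∀ m, 1 ≤ m → m ≤ n → dL I i m ω * dR I j m ω ≠ 0 := by
  rw [Aset, Set.mem_setOf_eq, tauC, lt_tauOf_iff]
  constructor
  · intro h m h1 hm hq; exact h m hm ⟨h1, hq⟩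
  · rintro h m hm ⟨h1, hq⟩; exact h m h1 hm hq

lemma one_le_tauC (I : Fin 3 → ℕ → Ω → ℝ) (i j : ℕ) (ω : Ω) : (0:ℕ∞) < tauC I i j ω := by
  have := (lt_tauOf_iff (fun n => 1 ≤ n ∧ dL I i n ω * dR I j n ω = 0) 0).mpr
    (fun m hm hP => by omega)
  exact_mod_cast this

lemma Tst_zero (I : Fin 3 → ℕ → Ω → ℝ) (i j : ℕ) (ω : Ω) : Tst I i j 0 ω = 0 := by
  simp [Tst]

lemma Tst_of_lt {I : Fin 3 → ℕ → Ω → ℝ} {i j n : ℕ} {ω : Ω} (h : (n:ℕ∞) < tauC I i j ω) :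
    Tst I i j n ω = n := by
  rw [Tst, min_eq_right h.le, ENat.toNat_coe]

lemma Tst_succ_of_lt {I : Fin 3 → ℕ → Ω → ℝ} {i j n : ℕ} {ω : Ω} (h : (n:ℕ∞) < tauC I i j ω) :
    Tst I i j (n+1) ω = n + 1 := by
  rw [Tst, min_eq_right, ENat.toNat_coe]
  · exact_mod_cast Order.add_one_le_of_lt h
lemma Tst_of_le {I : Fin 3 → ℕ → Ω → ℝ} {i j n : ℕ} {ω : Ω} (h : tauC I i j ω ≤ (n:ℕ∞)) :
    Tst I i j n ω = (tauC I i j ω).toNat := by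
  rw [Tst, min_eq_left h]

lemma Tst_succ_of_le {I : Fin 3 → ℕ → Ω → ℝ} {i j n : ℕ} {ω : Ω} (h : tauC I i j ω ≤ (n:ℕ∞)) :
    Tst I i j (n+1) ω = Tst I i j n ω := by
  rw [Tst_of_le h, Tst_of_le (h.trans (by exact_mod_cast Nat.le_succ n))]


section Meas
variable {Ω : Type*} [MeasurableSpace Ω]

lemma measurable_comp_nat {X : ℕ → Ω → ℝ} (hX : ∀ m, Measurable (X m)) {h : Ω → ℕ}
    (hh : Measurable h) : Measurable fun ω => X (h ω) ω := by
  intro s hs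
  have : (fun ω => X (h ω) ω) ⁻¹' s = ⋃ m, ({ω | h ω = m} ∩ X m ⁻¹' s) := by
    ext ω; simp only [Set.mem_preimage, Set.mem_iUnion, Set.mem_inter_iff, Set.mem_setOf_eq]
    exact ⟨fun hx => ⟨h ω, rfl, hx⟩, by rintro ⟨m, rfl, hx⟩; exact hx⟩
  rw [this]
  exact MeasurableSet.iUnion fun m => (hh (measurableSet_singleton m)).inter (hX m hs)

variable {I : Fin 3 → ℕ → Ω → ℝ} (hmeas : ∀ a k, Measurable (I a k)) (i j : ℕ)

include hmeas

lemma measurable_dL (n : ℕ) : Measurable (dL I i n) := by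
  apply Measurable.const_add
  exact Finset.measurable_sum _ fun k _ => (hmeas 1 k).sub (hmeas 0 k)

lemma measurable_dR (n : ℕ) : Measurable (dR I j n) := by
  apply Measurable.const_add
  exact Finset.measurable_sum _ fun k _ => (hmeas 2 k).sub (hmeas 1 k)

lemma measurable_Wp (n : ℕ) : Measurable (Wp I n) :=
  Finset.measurable_sum _ fun k _ => (hmeas 2 k).sub (hmeas 0 k)

lemma measurableSet_Aset (n : ℕ) : MeasurableSet (Aset I i j n) := by
  have : Aset I i j n = ⋂ m ∈ Finset.Icc 1 n, {ω | dL I i m ω * dR I j m ω ≠ 0} := by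
    ext ω
    simp only [Set.mem_iInter, Finset.mem_Icc, Set.mem_setOf_eq, mem_Aset_iff]
    exact ⟨fun h m hm => h m hm.1 hm.2, fun h m h1 h2 => h m ⟨h1, h2⟩⟩
  rw [this]
  exact MeasurableSet.biInter (Finset.Icc 1 n).countable_toSet fun m _ =>
    (((measurable_dL hmeas i m).mul (measurable_dR hmeas j m)) (measurableSet_singleton 0)).compl

lemma Tst_eq_sum (n : ℕ) (ω : Ω) :
    Tst I i j n ω = ∑ m ∈ Finset.range n, (if ω ∈ Aset I i j m then 1 else 0) := by
  induction n with
  | zero => simp [Tst_zero]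
  | succ n ih =>
    rw [Finset.sum_range_succ, ← ih]
    by_cases h : (n:ℕ∞) < tauC I i j ω
    · rw [Tst_succ_of_lt h, Tst_of_lt h, if_pos (show ω ∈ Aset I i j n from h)]
    · rw [Tst_succ_of_le (le_of_not_gt h), if_neg (show ¬ ω ∈ Aset I i j n from h), add_zero]

lemma measurable_Tst (n : ℕ) : Measurable (Tst I i j n) := by
  have : Tst I i j n = fun ω => ∑ m ∈ Finset.range n, (if ω ∈ Aset I i j m then 1 else 0) := by
    funext ω; exact Tst_eq_sum hmeas i j n ω
  rw [this]
  exact Finset.measurable_sum _ fun m _ =>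
    Measurable.ite (measurableSet_Aset hmeas i j m) measurable_const measurable_const

end Meas
end Main
section Prob
variable {Ω : Type*} [MeasurableSpace Ω] {μ : Measure Ω} [IsProbabilityMeasure μ]
  {I : Fin 3 → ℕ → Ω → ℝ}
  (hmeas : ∀ a k, Measurable (I a k))
  (hrad : ∀ a k, μ {ω | I a k ω = 1} = 1 / 2 ∧ μ {ω | I a k ω = -1} = 1 / 2)

include hmeas hrad

lemma ae_pm : ∀ᵐ ω ∂μ, ∀ (a : Fin 3) (k : ℕ), I a k ω = 1 ∨ I a k ω = -1 := by
  rw [ae_all_iff]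
  intro a
  rw [ae_all_iff]
  intro k
  have hA : MeasurableSet {ω | I a k ω = 1} := hmeas a k (measurableSet_singleton 1)
  have hB : MeasurableSet {ω | I a k ω = -1} := hmeas a k (measurableSet_singleton (-1))
  have hd : Disjoint {ω | I a k ω = 1} {ω | I a k ω = -1} := by
    rw [Set.disjoint_left]
    intro ω h1 h2
    simp only [Set.mem_setOf_eq] at h1 h2
    rw [h1] at h2; norm_num at h2
  have hu : μ ({ω | I a k ω = 1} ∪ {ω | I a k ω = -1}) = 1 := by
    rw [measure_union hd hB, (hrad a k).1, (hrad a k).2]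
    rw [ENNReal.div_add_div_same, one_add_one_eq_two]
    exact ENNReal.div_self (two_ne_zero) (ENNReal.ofNat_ne_top)
  have : μ ({ω | I a k ω = 1} ∪ {ω | I a k ω = -1})ᶜ = 0 := by
    rw [measure_compl (hA.union hB) (measure_ne_top μ _), hu, measure_univ]
    simp
  refine measure_mono_null ?_ this
  intro ω h
  simp only [Set.mem_compl_iff, Set.mem_union, Set.mem_setOf_eq] at h ⊢
  tauto

lemma ae_abs_le (a : Fin 3) (k : ℕ) : ∀ᵐ ω ∂μ, |I a k ω| ≤ 1 := by
  filter_upwards [ae_pm hmeas hrad] with ω h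
  rcases h a k with h' | h' <;> rw [h'] <;> norm_num

lemma integrable_I (a : Fin 3) (k : ℕ) : Integrable (I a k) μ := by
  refine Integrable.mono' (integrable_const 1) (hmeas a k).aestronglyMeasurable ?_
  filter_upwards [ae_abs_le hmeas hrad a k] with ω h
  rwa [Real.norm_eq_abs]

lemma integral_I (a : Fin 3) (k : ℕ) : ∫ ω, I a k ω ∂μ = 0 := by
  have hA : MeasurableSet {ω | I a k ω = 1} := hmeas a k (measurableSet_singleton 1)
  have hB : MeasurableSet {ω | I a k ω = -1} := hmeas a k (measurableSet_singleton (-1))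
  have heq : I a k =ᵐ[μ] fun ω =>
      Set.indicator {ω | I a k ω = 1} (fun _ => (1:ℝ)) ω
      + Set.indicator {ω | I a k ω = -1} (fun _ => (-1:ℝ)) ω := by
    filter_upwards [ae_pm hmeas hrad] with ω h
    rcases h a k with h' | h'
    · rw [Set.indicator_of_mem (by exact h'), Set.indicator_of_notMem (by
        simp only [Set.mem_setOf_eq, h']; norm_num), h']
      norm_num
    · rw [Set.indicator_of_notMem (by simp only [Set.mem_setOf_eq, h']; norm_num),
        Set.indicator_of_mem (by exact h'), h']
      norm_num
  rw [integral_congr_ae heq, integral_add, integral_indicator_const _ hA,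
    integral_indicator_const _ hB, measureReal_def, measureReal_def, (hrad a k).1, (hrad a k).2]
  · norm_num
  · exact (integrable_const (1:ℝ)).indicator hA
  · exact (integrable_const (-1:ℝ)).indicator hB

lemma integrable_I_mul (a b : Fin 3) (k l : ℕ) :
    Integrable (fun ω => I a k ω * I b l ω) μ := by
  refine Integrable.mono' (integrable_const 1)
    (((hmeas a k).mul (hmeas b l)).aestronglyMeasurable) ?_
  filter_upwards [ae_abs_le hmeas hrad a k, ae_abs_le hmeas hrad b l] with ω h1 h2
  rw [Real.norm_eq_abs, abs_mul]
  calc |I a k ω| * |I b l ω| ≤ 1 * 1 := mul_le_mul h1 h2 (abs_nonneg _) zero_le_one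
  _ = 1 := by norm_num

end Prob
section Prob2
variable {Ω : Type*} [MeasurableSpace Ω] {μ : Measure Ω} [IsProbabilityMeasure μ]
  {I : Fin 3 → ℕ → Ω → ℝ}
  (hmeas : ∀ a k, Measurable (I a k))
  (hindep : iIndepFun
      (fun (p : Fin 3 × ℕ) ω => I p.1 p.2 ω) μ)
  (hrad : ∀ a k, μ {ω | I a k ω = 1} = 1 / 2 ∧ μ {ω | I a k ω = -1} = 1 / 2)

include hmeas hindep hrad

lemma integral_I_mul_I {a b : Fin 3} (n : ℕ) (hab : a ≠ b) :
    ∫ ω, I a n ω * I b n ω ∂μ = 0 := by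
  have hne : ((a, n) : Fin 3 × ℕ) ≠ (b, n) := by simp [hab]
  have h := (hindep.indepFun hne).integral_fun_mul_eq_mul_integral
    (integrable_I hmeas hrad a n).aestronglyMeasurable (integrable_I hmeas hrad b n).aestronglyMeasurable
  calc ∫ ω, I a n ω * I b n ω ∂μ
      = (∫ ω, I a n ω ∂μ) * ∫ ω, I b n ω ∂μ := h
    _ = 0 := by rw [integral_I hmeas hrad, zero_mul]

omit hindep in
lemma integral_I_sq (a : Fin 3) (n : ℕ) : ∫ ω, I a n ω * I a n ω ∂μ = 1 := by
  have : (fun ω => I a n ω * I a n ω) =ᵐ[μ] fun _ => (1:ℝ) := by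
    filter_upwards [ae_pm hmeas hrad] with ω h
    rcases h a n with h' | h' <;> rw [h'] <;> norm_num
  rw [integral_congr_ae this]
  simp

lemma integral_xi_eta (n : ℕ) :
    ∫ ω, (I 1 n ω - I 0 n ω) * (I 2 n ω - I 1 n ω) ∂μ = -1 := by
  have hexp : ∀ ω, (I 1 n ω - I 0 n ω) * (I 2 n ω - I 1 n ω)
      = I 1 n ω * I 2 n ω - I 0 n ω * I 2 n ω - I 1 n ω * I 1 n ω + I 0 n ω * I 1 n ω := by
    intro ω; ring
  simp_rw [hexp]
  rw [integral_add, integral_sub, integral_sub]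
  · rw [integral_I_mul_I hmeas hindep hrad n (show (1:Fin 3) ≠ 2 by decide),
      integral_I_mul_I hmeas hindep hrad n (show (0:Fin 3) ≠ 2 by decide),
      integral_I_sq hmeas hrad 1 n,
      integral_I_mul_I hmeas hindep hrad n (show (0:Fin 3) ≠ 1 by decide)]
    norm_num
  · exact integrable_I_mul hmeas hrad 1 2 n n
  · exact integrable_I_mul hmeas hrad 0 2 n n
  · exact (integrable_I_mul hmeas hrad 1 2 n n).sub (integrable_I_mul hmeas hrad 0 2 n n)
  · exact integrable_I_mul hmeas hrad 1 1 n n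
  · exact ((integrable_I_mul hmeas hrad 1 2 n n).sub
      (integrable_I_mul hmeas hrad 0 2 n n)).sub (integrable_I_mul hmeas hrad 1 1 n n)
  · exact integrable_I_mul hmeas hrad 0 1 n n

lemma integral_I_sub_I (a b : Fin 3) (n : ℕ) : ∫ ω, I a n ω - I b n ω ∂μ = 0 := by
  rw [integral_sub (integrable_I hmeas hrad a n) (integrable_I hmeas hrad b n),
    integral_I hmeas hrad, integral_I hmeas hrad, sub_zero]

end Prob2
section Indep
variable {Ω : Type*} [MeasurableSpace Ω]

/-- partial sum of the first `m` of the time-indexed coordinates `(a, ·)`. -/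
noncomputable def sumVar (n : ℕ) (a : Fin 3) (m : ℕ) (x : Fin 3 × Fin n → ℝ) : ℝ :=
  ∑ k : Fin n, if (k:ℕ) < m then x (a, k) else 0

lemma measurable_sumVar (n : ℕ) (a : Fin 3) (m : ℕ) : Measurable (sumVar n a m) := by
  apply Finset.measurable_sum
  intro k _
  by_cases hk : (k:ℕ) < m
  · simpa [hk] using measurable_pi_apply (a, k)
  · simpa [hk] using measurable_const

lemma sumVar_apply (I : Fin 3 → ℕ → Ω → ℝ) {n m : ℕ} (a : Fin 3) (h : m ≤ n) (ω : Ω) :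
    sumVar n a m (fun p => I p.1 p.2 ω) = ∑ k ∈ Finset.range m, I a k ω := by
  have h1 : ∑ k ∈ Finset.range m, I a k ω
      = ∑ k ∈ Finset.range n, (if k < m then I a k ω else 0) := by
    rw [← Finset.sum_filter]
    congr 1
    ext k
    simp only [Finset.mem_filter, Finset.mem_range]
    omega
  rw [sumVar, h1]
  exact Fin.sum_univ_eq_sum_range (fun k => if k < m then I a k ω else 0) n

noncomputable def dLfun (i n m : ℕ) (x : Fin 3 × Fin n → ℝ) : ℝ :=
  2*(i:ℝ) + (sumVar n 1 m x - sumVar n 0 m x)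

noncomputable def dRfun (j n m : ℕ) (x : Fin 3 × Fin n → ℝ) : ℝ :=
  2*(j:ℝ) + (sumVar n 2 m x - sumVar n 1 m x)

lemma measurable_dLfun (i n m : ℕ) : Measurable (dLfun i n m) :=
  ((measurable_sumVar n 1 m).sub (measurable_sumVar n 0 m)).const_add _

lemma measurable_dRfun (j n m : ℕ) : Measurable (dRfun j n m) :=
  ((measurable_sumVar n 2 m).sub (measurable_sumVar n 1 m)).const_add _

lemma dLfun_apply (I : Fin 3 → ℕ → Ω → ℝ) {n m : ℕ} (i : ℕ) (h : m ≤ n) (ω : Ω) :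
    dLfun i n m (fun p => I p.1 p.2 ω) = dL I i m ω := by
  rw [dLfun, dL, sumVar_apply I 1 h, sumVar_apply I 0 h, Finset.sum_sub_distrib]

lemma dRfun_apply (I : Fin 3 → ℕ → Ω → ℝ) {n m : ℕ} (j : ℕ) (h : m ≤ n) (ω : Ω) :
    dRfun j n m (fun p => I p.1 p.2 ω) = dR I j m ω := by
  rw [dRfun, dR, sumVar_apply I 2 h, sumVar_apply I 1 h, Finset.sum_sub_distrib]

def AfunSet (i j n : ℕ) : Set (Fin 3 × Fin n → ℝ) :=
  {x | ∀ m, 1 ≤ m → m ≤ n → dLfun i n m x * dRfun j n m x ≠ 0}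

lemma measurableSet_AfunSet (i j n : ℕ) : MeasurableSet (AfunSet i j n) := by
  have : AfunSet i j n = ⋂ m ∈ Finset.Icc 1 n, {x | dLfun i n m x * dRfun j n m x ≠ 0} := by
    ext x
    simp only [Set.mem_iInter, Finset.mem_Icc, Set.mem_setOf_eq, AfunSet]
    exact ⟨fun h m hm => h m hm.1 hm.2, fun h m h1 h2 => h m ⟨h1, h2⟩⟩
  rw [this]
  exact MeasurableSet.biInter (Finset.Icc 1 n).countable_toSet fun m _ =>
    (((measurable_dLfun i n m).mul (measurable_dRfun j n m)) (measurableSet_singleton 0)).compl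

lemma mem_AfunSet_iff (I : Fin 3 → ℕ → Ω → ℝ) (i j n : ℕ) (ω : Ω) :
    (fun p : Fin 3 × Fin n => I p.1 p.2 ω) ∈ AfunSet i j n ↔ ω ∈ Aset I i j n := by
  rw [mem_Aset_iff, AfunSet, Set.mem_setOf_eq]
  constructor
  · intro h m h1 h2
    have := h m h1 h2
    rwa [dLfun_apply I i h2, dRfun_apply I j h2] at this
  · intro h m h1 h2
    rw [dLfun_apply I i h2, dRfun_apply I j h2]
    exact h m h1 h2

variable [MeasurableSpace Ω] {μ : MeasureTheory.Measure Ω}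
  {I : Fin 3 → ℕ → Ω → ℝ}
  (hmeas : ∀ a k, Measurable (I a k))
  (hindep : iIndepFun
      (fun (p : Fin 3 × ℕ) ω => I p.1 p.2 ω) μ)

include hmeas hindep in
lemma indep_past_present (n : ℕ) {φ : (Fin 3 × Fin n → ℝ) → ℝ} {ψ : (Fin 3 → ℝ) → ℝ}
    (hφ : Measurable φ) (hψ : Measurable ψ) :
    IndepFun (fun ω => φ fun p : Fin 3 × Fin n => I p.1 p.2 ω)
      (fun ω => ψ fun a : Fin 3 => I a n ω) μ := by
  classical
  set S : Finset (Fin 3 × ℕ) := Finset.univ ×ˢ Finset.range n with hS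
  set T : Finset (Fin 3 × ℕ) := Finset.univ ×ˢ {n} with hT
  have hST : Disjoint S T := by
    rw [Finset.disjoint_left]
    intro p hp hq
    rw [hS, Finset.mem_product, Finset.mem_range] at hp
    rw [hT, Finset.mem_product, Finset.mem_singleton] at hq
    omega
  have h0 := hindep.indepFun_finset S T hST (fun p => hmeas p.1 p.2)
  have me1 : Measurable fun (x : {p // p ∈ S} → ℝ) (q : Fin 3 × Fin n) =>
      x ⟨(q.1, (q.2 : ℕ)), by
        rw [hS, Finset.mem_product]
        exact ⟨Finset.mem_univ _, Finset.mem_range.mpr q.2.isLt⟩⟩ :=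
    measurable_pi_lambda _ fun q => measurable_pi_apply _
  have me2 : Measurable fun (x : {p // p ∈ T} → ℝ) (a : Fin 3) =>
      x ⟨(a, n), by rw [hT, Finset.mem_product]; exact ⟨Finset.mem_univ _, Finset.mem_singleton_self n⟩⟩ :=
    measurable_pi_lambda _ fun q => measurable_pi_apply _
  exact h0.comp (hφ.comp me1) (hψ.comp me2)

end Indep
section Rec
variable {Ω : Type*} [MeasurableSpace Ω] {μ : Measure Ω} [IsProbabilityMeasure μ]
  {I : Fin 3 → ℕ → Ω → ℝ}
  (hmeas : ∀ a k, Measurable (I a k))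
  (hindep : iIndepFun
      (fun (p : Fin 3 × ℕ) ω => I p.1 p.2 ω) μ)
  (hrad : ∀ a k, μ {ω | I a k ω = 1} = 1 / 2 ∧ μ {ω | I a k ω = -1} = 1 / 2)
  (i j : ℕ)

include hmeas hindep in
lemma integral_past_mul_present (n : ℕ) {φ : (Fin 3 × Fin n → ℝ) → ℝ} {ψ : (Fin 3 → ℝ) → ℝ}
    (hφ : Measurable φ) (hψ : Measurable ψ) :
    ∫ ω, φ (fun p : Fin 3 × Fin n => I p.1 p.2 ω) * ψ (fun a : Fin 3 => I a n ω) ∂μ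
      = (∫ ω, φ (fun p : Fin 3 × Fin n => I p.1 p.2 ω) ∂μ)
        * ∫ ω, ψ (fun a : Fin 3 => I a n ω) ∂μ := by
  have m1 : Measurable fun ω => φ (fun p : Fin 3 × Fin n => I p.1 p.2 ω) :=
    hφ.comp (measurable_pi_lambda _ fun p => hmeas p.1 p.2)
  have m2 : Measurable fun ω => ψ (fun a : Fin 3 => I a n ω) :=
    hψ.comp (measurable_pi_lambda _ fun a => hmeas a n)
  exact (indep_past_present hmeas hindep n hφ hψ).integral_fun_mul_eq_mul_integral
    m1.aestronglyMeasurable m2.aestronglyMeasurable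

omit [IsProbabilityMeasure μ] in
lemma integrable_bdd [IsFiniteMeasure μ] {f : Ω → ℝ} (hf : Measurable f) {C : ℝ}
    (h : ∀ᵐ ω ∂μ, |f ω| ≤ C) : Integrable f μ := by
  refine Integrable.mono' (integrable_const C) hf.aestronglyMeasurable ?_
  filter_upwards [h] with ω hω
  rwa [Real.norm_eq_abs]

lemma abs_sum_le_two_mul {a : ℕ → ℝ} (h : ∀ k, |a k| ≤ 2) (m : ℕ) :
    |∑ k ∈ Finset.range m, a k| ≤ 2*m := by
  calc |∑ k ∈ Finset.range m, a k| ≤ ∑ k ∈ Finset.range m, |a k| :=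
        Finset.abs_sum_le_sum_abs _ _
    _ ≤ ∑ _k ∈ Finset.range m, (2:ℝ) := Finset.sum_le_sum fun k _ => h k
    _ = 2*m := by rw [Finset.sum_const, Finset.card_range, nsmul_eq_mul]; ring

/-- pointwise consequences of the good event -/
lemma good_abs {ω : Ω} (hg : ∀ (a : Fin 3) (k : ℕ), I a k ω = 1 ∨ I a k ω = -1)
    (a : Fin 3) (k : ℕ) : |I a k ω| ≤ 1 := by
  rcases hg a k with h | h <;> rw [h] <;> norm_num

lemma good_abs_sub {ω : Ω} (hg : ∀ (a : Fin 3) (k : ℕ), I a k ω = 1 ∨ I a k ω = -1)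
    (a b : Fin 3) (k : ℕ) : |I a k ω - I b k ω| ≤ 2 := by
  calc |I a k ω - I b k ω| ≤ |I a k ω| + |I b k ω| := abs_sub _ _
    _ ≤ 1 + 1 := add_le_add (good_abs hg a k) (good_abs hg b k)
    _ = 2 := by norm_num

lemma good_abs_dL {ω : Ω} (hg : ∀ (a : Fin 3) (k : ℕ), I a k ω = 1 ∨ I a k ω = -1)
    (m : ℕ) : |dL I i m ω| ≤ 2*i + 2*m := by
  rw [dL]
  calc |2*(i:ℝ) + ∑ k ∈ Finset.range m, (I 1 k ω - I 0 k ω)|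
      ≤ |2*(i:ℝ)| + |∑ k ∈ Finset.range m, (I 1 k ω - I 0 k ω)| := abs_add_le _ _
    _ ≤ 2*i + 2*m := by
        refine add_le_add (by rw [abs_of_nonneg (by positivity)]) ?_
        exact abs_sum_le_two_mul (fun k => good_abs_sub hg 1 0 k) m

lemma good_abs_dR {ω : Ω} (hg : ∀ (a : Fin 3) (k : ℕ), I a k ω = 1 ∨ I a k ω = -1)
    (m : ℕ) : |dR I j m ω| ≤ 2*j + 2*m := by
  rw [dR]
  calc |2*(j:ℝ) + ∑ k ∈ Finset.range m, (I 2 k ω - I 1 k ω)|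
      ≤ |2*(j:ℝ)| + |∑ k ∈ Finset.range m, (I 2 k ω - I 1 k ω)| := abs_add_le _ _
    _ ≤ 2*j + 2*m := by
        refine add_le_add (by rw [abs_of_nonneg (by positivity)]) ?_
        exact abs_sum_le_two_mul (fun k => good_abs_sub hg 2 1 k) m

lemma good_abs_Wp {ω : Ω} (hg : ∀ (a : Fin 3) (k : ℕ), I a k ω = 1 ∨ I a k ω = -1)
    (m : ℕ) : |Wp I m ω| ≤ 2*m :=
  abs_sum_le_two_mul (fun k => good_abs_sub hg 2 0 k) m

lemma Tst_le_self (n : ℕ) (ω : Ω) : Tst I i j n ω ≤ n := by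
  rw [Tst]
  have h := ENat.toNat_le_toNat (min_le_right (tauC I i j ω) (n:ℕ∞)) (by simp)
  simpa using h

/-- the indicator of `Aset n` as a function of the past. -/
lemma indicator_Aset_eq (n : ℕ) (ω : Ω) :
    (Aset I i j n).indicator (fun _ => (1:ℝ)) ω
      = (AfunSet i j n).indicator (fun _ => (1:ℝ)) (fun p : Fin 3 × Fin n => I p.1 p.2 ω) := by
  by_cases h : ω ∈ Aset I i j n
  · rw [Set.indicator_of_mem h, Set.indicator_of_mem ((mem_AfunSet_iff I i j n ω).mpr h)]
  · rw [Set.indicator_of_notMem h,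
      Set.indicator_of_notMem (fun hc => h ((mem_AfunSet_iff I i j n ω).mp hc))]

include hmeas hrad in
lemma integrable_SVW (n : ℕ) :
    Integrable (fun ω => Wp I (Tst I i j n ω) ω) μ := by
  refine integrable_bdd (measurable_comp_nat (fun m => measurable_Wp hmeas m)
    (measurable_Tst hmeas i j n)) (C := 2*n) ?_
  filter_upwards [ae_pm hmeas hrad] with ω hg
  calc |Wp I (Tst I i j n ω) ω| ≤ 2*(Tst I i j n ω) := good_abs_Wp hg _
    _ ≤ 2*n := by
        have h' := Tst_le_self (I := I) i j n ω
        have : ((Tst I i j n ω : ℕ) : ℝ) ≤ (n : ℝ) := by exact_mod_cast h'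
        nlinarith

lemma abs_indicator_one_le (s : Set Ω) (ω : Ω) : |s.indicator (fun _ => (1:ℝ)) ω| ≤ 1 := by
  by_cases h : ω ∈ s <;> simp [h]

include hmeas hindep hrad in
lemma integral_SVW (n : ℕ) : ∫ ω, Wp I (Tst I i j n ω) ω ∂μ = 0 := by
  induction n with
  | zero =>
    have : ∀ ω, Wp I (Tst I i j 0 ω) ω = 0 := fun ω => by simp [Tst_zero, Wp]
    simp only [this, integral_zero]
  | succ n ih =>
    have hstep : ∀ ω, Wp I (Tst I i j (n+1) ω) ω = Wp I (Tst I i j n ω) ω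
        + (Aset I i j n).indicator (fun _ => (1:ℝ)) ω * (I 2 n ω - I 0 n ω) := by
      intro ω
      by_cases h : (n:ℕ∞) < tauC I i j ω
      · rw [Tst_succ_of_lt h, Tst_of_lt h,
          Set.indicator_of_mem (show ω ∈ Aset I i j n from h), Wp, Wp, Finset.sum_range_succ]
        ring
      · rw [Tst_succ_of_le (le_of_not_gt h),
          Set.indicator_of_notMem (show ω ∉ Aset I i j n from h)]
        ring
    have hint2 : Integrable (fun ω =>
        (Aset I i j n).indicator (fun _ => (1:ℝ)) ω * (I 2 n ω - I 0 n ω)) μ := by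
      refine integrable_bdd (Measurable.mul
        (measurable_const.indicator (measurableSet_Aset hmeas i j n))
        ((hmeas 2 n).sub (hmeas 0 n))) (C := 2) ?_
      filter_upwards [ae_pm hmeas hrad] with ω hg
      rw [abs_mul]
      calc |(Aset I i j n).indicator (fun _ => (1:ℝ)) ω| * |I 2 n ω - I 0 n ω|
          ≤ 1 * 2 := by
            refine mul_le_mul (abs_indicator_one_le _ _) (good_abs_sub hg 2 0 n)
              (abs_nonneg _) zero_le_one
        _ = 2 := by norm_num
    simp_rw [hstep]
    rw [integral_add (integrable_SVW hmeas hrad i j n) hint2, ih, zero_add]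
    have hrepr : ∀ ω, (Aset I i j n).indicator (fun _ => (1:ℝ)) ω * (I 2 n ω - I 0 n ω)
        = ((AfunSet i j n).indicator (fun _ => (1:ℝ)))
            (fun p : Fin 3 × Fin n => I p.1 p.2 ω)
          * (fun x : Fin 3 → ℝ => x 2 - x 0) (fun a : Fin 3 => I a n ω) := by
      intro ω
      rw [← indicator_Aset_eq]
    simp_rw [hrepr]
    rw [integral_past_mul_present hmeas hindep n (ψ := fun x : Fin 3 → ℝ => x 2 - x 0)
      (measurable_const.indicator (measurableSet_AfunSet i j n))
      ((measurable_pi_apply 2).sub (measurable_pi_apply 0))]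
    have : ∫ ω, (fun x : Fin 3 → ℝ => x 2 - x 0) (fun a : Fin 3 => I a n ω) ∂μ = 0 :=
      integral_I_sub_I hmeas hindep hrad 2 0 n
    rw [this, mul_zero]
end Rec
section Rec2
variable {Ω : Type*} [MeasurableSpace Ω] {μ : Measure Ω} [IsProbabilityMeasure μ]
  {I : Fin 3 → ℕ → Ω → ℝ}
  (hmeas : ∀ a k, Measurable (I a k))
  (hindep : iIndepFun
      (fun (p : Fin 3 × ℕ) ω => I p.1 p.2 ω) μ)
  (hrad : ∀ a k, μ {ω | I a k ω = 1} = 1 / 2 ∧ μ {ω | I a k ω = -1} = 1 / 2)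
  (i j : ℕ)

include hmeas hrad in
lemma integrable_SVQ (n : ℕ) :
    Integrable (fun ω => dL I i (Tst I i j n ω) ω * dR I j (Tst I i j n ω) ω) μ := by
  refine integrable_bdd (Measurable.mul
    (measurable_comp_nat (fun m => measurable_dL hmeas i m) (measurable_Tst hmeas i j n))
    (measurable_comp_nat (fun m => measurable_dR hmeas j m) (measurable_Tst hmeas i j n)))
    (C := (2*i+2*n) * (2*j+2*n)) ?_
  filter_upwards [ae_pm hmeas hrad] with ω hg
  rw [abs_mul]
  have hT := Tst_le_self (I := I) i j n ω
  have hTr : ((Tst I i j n ω : ℕ) : ℝ) ≤ (n : ℝ) := by exact_mod_cast hT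
  refine mul_le_mul ?_ ?_ (abs_nonneg _) (by positivity)
  · calc |dL I i (Tst I i j n ω) ω| ≤ 2*i + 2*(Tst I i j n ω) := good_abs_dL i hg _
      _ ≤ 2*i + 2*n := by nlinarith
  · calc |dR I j (Tst I i j n ω) ω| ≤ 2*j + 2*(Tst I i j n ω) := good_abs_dR j hg _
      _ ≤ 2*j + 2*n := by nlinarith

include hmeas in
lemma integrable_Tst_real (n : ℕ) : Integrable (fun ω => (Tst I i j n ω : ℝ)) μ := by
  refine integrable_bdd (Measurable.comp measurable_from_top (measurable_Tst hmeas i j n))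
    (C := n) ?_
  refine Filter.Eventually.of_forall fun ω => ?_
  rw [abs_of_nonneg (by positivity)]
  exact_mod_cast Tst_le_self (I := I) i j n ω

include hmeas hindep hrad in
lemma integral_SVQ_add (n : ℕ) :
    ∫ ω, (dL I i (Tst I i j n ω) ω * dR I j (Tst I i j n ω) ω + (Tst I i j n ω : ℝ)) ∂μ
      = 4*(i:ℝ)*(j:ℝ) := by
  induction n with
  | zero =>
    have : ∀ ω, dL I i (Tst I i j 0 ω) ω * dR I j (Tst I i j 0 ω) ω + (Tst I i j 0 ω : ℝ)
        = 4*(i:ℝ)*(j:ℝ) := by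
      intro ω
      rw [Tst_zero]
      simp only [dL, dR, Finset.range_zero, Finset.sum_empty, add_zero, Nat.cast_zero]
      ring
    simp_rw [this]
    simp
  | succ n ih =>
    set ind : Ω → ℝ := (Aset I i j n).indicator (fun _ => (1:ℝ)) with hind
    have hstep : ∀ ω,
        dL I i (Tst I i j (n+1) ω) ω * dR I j (Tst I i j (n+1) ω) ω + (Tst I i j (n+1) ω : ℝ)
        = (dL I i (Tst I i j n ω) ω * dR I j (Tst I i j n ω) ω + (Tst I i j n ω : ℝ))
          + ((ind ω * dL I i n ω) * (I 2 n ω - I 1 n ω)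
             + (ind ω * dR I j n ω) * (I 1 n ω - I 0 n ω)
             + ind ω * ((I 1 n ω - I 0 n ω) * (I 2 n ω - I 1 n ω) + 1)) := by
      intro ω
      by_cases h : (n:ℕ∞) < tauC I i j ω
      · rw [Tst_succ_of_lt h, Tst_of_lt h, hind,
          Set.indicator_of_mem (show ω ∈ Aset I i j n from h)]
        simp only [dL, dR, Finset.sum_range_succ]
        push_cast
        ring
      · rw [Tst_succ_of_le (le_of_not_gt h), hind,
          Set.indicator_of_notMem (show ω ∉ Aset I i j n from h)]
        ring
    have hbd : ∀ᵐ ω ∂μ, |ind ω| ≤ 1 := Filter.Eventually.of_forall fun ω => by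
      rw [hind]; exact abs_indicator_one_le _ _
    have hmind : Measurable ind := measurable_const.indicator (measurableSet_Aset hmeas i j n)
    have hint1 : Integrable (fun ω => (ind ω * dL I i n ω) * (I 2 n ω - I 1 n ω)) μ := by
      refine integrable_bdd ((hmind.mul (measurable_dL hmeas i n)).mul
        ((hmeas 2 n).sub (hmeas 1 n))) (C := 1 * (2*i+2*n) * 2) ?_
      filter_upwards [ae_pm hmeas hrad] with ω hg
      rw [abs_mul, abs_mul]
      refine mul_le_mul (mul_le_mul (abs_indicator_one_le _ _) (good_abs_dL i hg n)
        (abs_nonneg _) zero_le_one) (good_abs_sub hg 2 1 n) (abs_nonneg _) (by positivity)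
    have hint2 : Integrable (fun ω => (ind ω * dR I j n ω) * (I 1 n ω - I 0 n ω)) μ := by
      refine integrable_bdd ((hmind.mul (measurable_dR hmeas j n)).mul
        ((hmeas 1 n).sub (hmeas 0 n))) (C := 1 * (2*j+2*n) * 2) ?_
      filter_upwards [ae_pm hmeas hrad] with ω hg
      rw [abs_mul, abs_mul]
      refine mul_le_mul (mul_le_mul (abs_indicator_one_le _ _) (good_abs_dR j hg n)
        (abs_nonneg _) zero_le_one) (good_abs_sub hg 1 0 n) (abs_nonneg _) (by positivity)
    have hint3 : Integrable (fun ω =>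
        ind ω * ((I 1 n ω - I 0 n ω) * (I 2 n ω - I 1 n ω) + 1)) μ := by
      refine integrable_bdd (hmind.mul ((((hmeas 1 n).sub (hmeas 0 n)).mul
        ((hmeas 2 n).sub (hmeas 1 n))).add measurable_const)) (C := 1 * (2*2+1)) ?_
      filter_upwards [ae_pm hmeas hrad] with ω hg
      rw [abs_mul]
      refine mul_le_mul (abs_indicator_one_le _ _) ?_ (abs_nonneg _) zero_le_one
      calc |(I 1 n ω - I 0 n ω) * (I 2 n ω - I 1 n ω) + 1|
          ≤ |(I 1 n ω - I 0 n ω) * (I 2 n ω - I 1 n ω)| + 1 := by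
            calc _ ≤ |(I 1 n ω - I 0 n ω) * (I 2 n ω - I 1 n ω)| + |(1:ℝ)| := abs_add_le _ _
            _ = _ := by norm_num
        _ ≤ 2*2 + 1 := by
            refine add_le_add ?_ le_rfl
            rw [abs_mul]
            exact mul_le_mul (good_abs_sub hg 1 0 n) (good_abs_sub hg 2 1 n)
              (abs_nonneg _) (by norm_num)
    have hA : Integrable (fun ω =>
        dL I i (Tst I i j n ω) ω * dR I j (Tst I i j n ω) ω + (Tst I i j n ω : ℝ)) μ := by
      exact (integrable_SVQ hmeas hrad i j n).add (integrable_Tst_real hmeas i j n)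
    have hB : Integrable (fun ω =>
        (ind ω * dL I i n ω) * (I 2 n ω - I 1 n ω)
          + (ind ω * dR I j n ω) * (I 1 n ω - I 0 n ω)
          + ind ω * ((I 1 n ω - I 0 n ω) * (I 2 n ω - I 1 n ω) + 1)) μ := by
      exact (hint1.add hint2).add hint3
    have hC : Integrable (fun ω =>
        (ind ω * dL I i n ω) * (I 2 n ω - I 1 n ω)
          + (ind ω * dR I j n ω) * (I 1 n ω - I 0 n ω)) μ := by
      exact hint1.add hint2
    simp_rw [hstep]
    rw [integral_add hA hB, ih, integral_add hC hint3, integral_add hint1 hint2]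
    -- three product terms vanish
    have hz1 : ∫ ω, (ind ω * dL I i n ω) * (I 2 n ω - I 1 n ω) ∂μ = 0 := by
      have hrepr : ∀ ω, (ind ω * dL I i n ω) * (I 2 n ω - I 1 n ω)
          = (fun x => (AfunSet i j n).indicator (fun _ => (1:ℝ)) x * dLfun i n n x)
              (fun p : Fin 3 × Fin n => I p.1 p.2 ω)
            * (fun x : Fin 3 → ℝ => x 2 - x 1) (fun a : Fin 3 => I a n ω) := by
        intro ω
        rw [hind, indicator_Aset_eq]
        simp only [dLfun_apply I i (le_refl n)]
      simp_rw [hrepr]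
      rw [integral_past_mul_present hmeas hindep n
        (φ := fun x => (AfunSet i j n).indicator (fun _ => (1:ℝ)) x * dLfun i n n x)
        (ψ := fun x : Fin 3 → ℝ => x 2 - x 1)
        ((measurable_const.indicator (measurableSet_AfunSet i j n)).mul
          (measurable_dLfun i n n))
        ((measurable_pi_apply 2).sub (measurable_pi_apply 1)),
        integral_I_sub_I hmeas hindep hrad 2 1 n, mul_zero]
    have hz2 : ∫ ω, (ind ω * dR I j n ω) * (I 1 n ω - I 0 n ω) ∂μ = 0 := by
      have hrepr : ∀ ω, (ind ω * dR I j n ω) * (I 1 n ω - I 0 n ω)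
          = (fun x => (AfunSet i j n).indicator (fun _ => (1:ℝ)) x * dRfun j n n x)
              (fun p : Fin 3 × Fin n => I p.1 p.2 ω)
            * (fun x : Fin 3 → ℝ => x 1 - x 0) (fun a : Fin 3 => I a n ω) := by
        intro ω
        rw [hind, indicator_Aset_eq]
        simp only [dRfun_apply I j (le_refl n)]
      simp_rw [hrepr]
      rw [integral_past_mul_present hmeas hindep n
        (φ := fun x => (AfunSet i j n).indicator (fun _ => (1:ℝ)) x * dRfun j n n x)
        (ψ := fun x : Fin 3 → ℝ => x 1 - x 0)
        ((measurable_const.indicator (measurableSet_AfunSet i j n)).mul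
          (measurable_dRfun j n n))
        ((measurable_pi_apply 1).sub (measurable_pi_apply 0)),
        integral_I_sub_I hmeas hindep hrad 1 0 n, mul_zero]
    have hz3 : ∫ ω, ind ω * ((I 1 n ω - I 0 n ω) * (I 2 n ω - I 1 n ω) + 1) ∂μ = 0 := by
      have hrepr : ∀ ω, ind ω * ((I 1 n ω - I 0 n ω) * (I 2 n ω - I 1 n ω) + 1)
          = (fun x => (AfunSet i j n).indicator (fun _ => (1:ℝ)) x)
              (fun p : Fin 3 × Fin n => I p.1 p.2 ω)
            * (fun x : Fin 3 → ℝ => (x 1 - x 0) * (x 2 - x 1) + 1)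
              (fun a : Fin 3 => I a n ω) := by
        intro ω
        rw [hind, indicator_Aset_eq]
      simp_rw [hrepr]
      rw [integral_past_mul_present hmeas hindep n
        (ψ := fun x : Fin 3 → ℝ => (x 1 - x 0) * (x 2 - x 1) + 1)
        (measurable_const.indicator (measurableSet_AfunSet i j n))
        ((((measurable_pi_apply 1).sub (measurable_pi_apply 0)).mul
          ((measurable_pi_apply 2).sub (measurable_pi_apply 1))).add measurable_const)]
      have : ∫ ω, (fun x : Fin 3 → ℝ => (x 1 - x 0) * (x 2 - x 1) + 1)
          (fun a : Fin 3 => I a n ω) ∂μ = 0 := by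
        show ∫ ω, ((I 1 n ω - I 0 n ω) * (I 2 n ω - I 1 n ω) + 1) ∂μ = 0
        have hxe : Integrable (fun ω => (I 1 n ω - I 0 n ω) * (I 2 n ω - I 1 n ω)) μ := by
          refine integrable_bdd ((((hmeas 1 n).sub (hmeas 0 n)).mul
            ((hmeas 2 n).sub (hmeas 1 n)))) (C := 4) ?_
          filter_upwards [ae_pm hmeas hrad] with ω hg
          rw [abs_mul]
          calc |I 1 n ω - I 0 n ω| * |I 2 n ω - I 1 n ω| ≤ 2*2 :=
              mul_le_mul (good_abs_sub hg 1 0 n) (good_abs_sub hg 2 1 n)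
                (abs_nonneg _) (by norm_num)
            _ = 4 := by norm_num
        rw [integral_add hxe (integrable_const 1), integral_xi_eta hmeas hindep hrad n]
        simp
      rw [this, mul_zero]
    rw [hz1, hz2, hz3]
    ring
end Rec2
section Fin
variable {Ω : Type*} [MeasurableSpace Ω] {μ : Measure Ω} [IsProbabilityMeasure μ]
  {I : Fin 3 → ℕ → Ω → ℝ}
  (hmeas : ∀ a k, Measurable (I a k))
  (hindep : iIndepFun
      (fun (p : Fin 3 × ℕ) ω => I p.1 p.2 ω) μ)
  (hrad : ∀ a k, μ {ω | I a k ω = 1} = 1 / 2 ∧ μ {ω | I a k ω = -1} = 1 / 2)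
  {i j : ℕ} (hi : 1 ≤ i) (hj : 1 ≤ j)

lemma good_incr_xi {ω : Ω} (hg : ∀ (a : Fin 3) (k : ℕ), I a k ω = 1 ∨ I a k ω = -1)
    (a b : Fin 3) (k : ℕ) :
    I a k ω - I b k ω = -2 ∨ I a k ω - I b k ω = 0 ∨ I a k ω - I b k ω = 2 := by
  rcases hg a k with h1 | h1 <;> rcases hg b k with h2 | h2 <;> rw [h1, h2] <;> norm_num

include hi hj in
/-- on the good event, at any time before (or at) the first collision both
distances are nonnegative (indeed in `2ℕ`). -/
lemma good_nonneg_at {ω : Ω} (hg : ∀ (a : Fin 3) (k : ℕ), I a k ω = 1 ∨ I a k ω = -1)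
    (m : ℕ) (h : ∀ l, 1 ≤ l → l < m → dL I i l ω * dR I j l ω ≠ 0) :
    0 ≤ dL I i m ω ∧ 0 ≤ dR I j m ω := by
  obtain ⟨p, q, hp, hq⟩ := walk_nonneg_at i j hi hj (fun k => I 1 k ω - I 0 k ω)
    (fun k => I 2 k ω - I 1 k ω) (fun k => good_incr_xi hg 1 0 k)
    (fun k => good_incr_xi hg 2 1 k) m (by
      intro l h1 hl
      have := h l h1 hl
      rwa [dL, dR] at this)
  constructor
  · rw [dL]; rw [hp]; positivity
  · rw [dR]; rw [hq]; positivity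

include hmeas hrad hi hj in
lemma ae_SVQ_nonneg (n : ℕ) :
    ∀ᵐ ω ∂μ, 0 ≤ dL I i (Tst I i j n ω) ω * dR I j (Tst I i j n ω) ω := by
  filter_upwards [ae_pm hmeas hrad] with ω hg
  have hno : ∀ l, 1 ≤ l → l < Tst I i j n ω → dL I i l ω * dR I j l ω ≠ 0 := by
    intro l h1 hl
    by_cases h : (n:ℕ∞) < tauC I i j ω
    · rw [Tst_of_lt h] at hl
      exact (mem_Aset_iff I i j n ω).mp h l h1 hl.le
    · have hle : tauC I i j ω ≤ (n:ℕ∞) := le_of_not_gt h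
      have hne : tauC I i j ω ≠ ⊤ := by
        intro hc; rw [hc] at hle; exact absurd (le_antisymm hle le_top) (by simp)
      rw [Tst_of_le hle] at hl
      have hspec := tauOf_spec (fun n => 1 ≤ n ∧ dL I i n ω * dR I j n ω = 0) hne
      exact fun heq => hspec.2 l hl ⟨h1, heq⟩
  obtain ⟨h1, h2⟩ := good_nonneg_at hi hj hg (Tst I i j n ω) hno
  positivity

include hmeas hindep hrad hi hj in
lemma integral_Tst_le (n : ℕ) : ∫ ω, (Tst I i j n ω : ℝ) ∂μ ≤ 4*(i:ℝ)*(j:ℝ) := by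
  have h := integral_SVQ_add hmeas hindep hrad i j n
  rw [integral_add (integrable_SVQ hmeas hrad i j n) (integrable_Tst_real hmeas i j n)] at h
  have h0 : 0 ≤ ∫ ω, dL I i (Tst I i j n ω) ω * dR I j (Tst I i j n ω) ω ∂μ :=
    integral_nonneg_of_ae (ae_SVQ_nonneg hmeas hrad hi hj n)
  linarith

lemma Tst_mono (ω : Ω) : Monotone fun n => Tst I i j n ω := by
  intro n n' hn
  exact ENat.toNat_le_toNat (min_le_min_left _ (by exact_mod_cast hn))
    (ne_top_of_le_ne_top (by simp) (min_le_right _ _))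

include hmeas hindep hrad hi hj in
lemma lintegral_sup_Tst_le :
    ∫⁻ ω, (⨆ n, (Tst I i j n ω : ℝ≥0∞)) ∂μ ≤ ENNReal.ofReal (4*(i:ℝ)*(j:ℝ)) := by
  have hm : ∀ n : ℕ, Measurable fun ω => (Tst I i j n ω : ℝ≥0∞) :=
    fun n => measurable_from_top.comp (measurable_Tst hmeas i j n)
  rw [lintegral_iSup hm]
  · refine iSup_le fun n => ?_
    have h1 : ∫⁻ ω, (Tst I i j n ω : ℝ≥0∞) ∂μ
        = ENNReal.ofReal (∫ ω, (Tst I i j n ω : ℝ) ∂μ) := by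
      rw [ofReal_integral_eq_lintegral_ofReal (integrable_Tst_real hmeas i j n)
        (Filter.Eventually.of_forall fun ω => by positivity)]
      congr 1
      funext ω
      rw [ENNReal.ofReal_natCast]
    rw [h1]
    exact ENNReal.ofReal_le_ofReal (integral_Tst_le hmeas hindep hrad hi hj n)
  · intro n n' hn
    intro ω
    simp only
    exact_mod_cast Tst_mono (I := I) (i := i) (j := j) ω hn

include hmeas hindep hrad hi hj in
lemma ae_tau_ne_top : ∀ᵐ ω ∂μ, tauC I i j ω ≠ ⊤ := by
  have hG : Measurable fun ω => ⨆ n, (Tst I i j n ω : ℝ≥0∞) :=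
    Measurable.iSup fun n => measurable_from_top.comp (measurable_Tst hmeas i j n)
  have hfin := ae_lt_top hG
    ((lintegral_sup_Tst_le hmeas hindep hrad hi hj).trans_lt ENNReal.ofReal_lt_top).ne
  filter_upwards [hfin] with ω hω hc
  have : ∀ n : ℕ, Tst I i j n ω = n := by
    intro n
    rw [Tst, hc, min_eq_right le_top, ENat.toNat_coe]
  rw [show (⨆ n, (Tst I i j n ω : ℝ≥0∞)) = ⊤ from ?_] at hω
  · exact absurd hω (by simp)
  · simp only [this]
    exact ENNReal.iSup_natCast

include hmeas hindep hrad hi hj in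
lemma measurable_Nnat : Measurable fun ω => (tauC I i j ω).toNat := by
  apply measurable_to_countable'
  intro m
  have hsucc : ∀ m' : ℕ, MeasurableSet {ω | (tauC I i j ω).toNat = m' + 1} := by
    intro m'
    have : {ω | (tauC I i j ω).toNat = m' + 1}
        = Aset I i j m' ∩ (Aset I i j (m' + 1))ᶜ := by
      ext ω
      simp only [Set.mem_setOf_eq, Set.mem_inter_iff, Set.mem_compl_iff, Aset, not_lt]
      have hcoe : ((m' : ℕ∞) + 1) = ((m' + 1 : ℕ) : ℕ∞) := by push_cast; ring
      constructor
      · intro h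
        have hne : tauC I i j ω ≠ ⊤ := by
          intro hc; rw [hc] at h; simp at h
        have heq : tauC I i j ω = ((m' + 1 : ℕ) : ℕ∞) := by
          rw [← h, ENat.coe_toNat hne]
        rw [heq]
        constructor
        · exact_mod_cast Nat.lt_succ_self m'
        · exact le_refl _
      · rintro ⟨h1, h2⟩
        have hne : tauC I i j ω ≠ ⊤ :=
          ne_top_of_le_ne_top (ENat.coe_ne_top _) h2
        have hk : ((tauC I i j ω).toNat : ℕ∞) = tauC I i j ω := ENat.coe_toNat hne
        rw [← hk] at h1 h2
        have h1' : m' < (tauC I i j ω).toNat := by exact_mod_cast h1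
        have h2' : (tauC I i j ω).toNat ≤ m' + 1 := by exact_mod_cast h2
        omega
    rw [this]
    exact (measurableSet_Aset hmeas i j m').inter (measurableSet_Aset hmeas i j (m'+1)).compl
  rcases m with _ | m'
  · have : (fun ω => (tauC I i j ω).toNat) ⁻¹' {0}
        = (⋃ m', {ω | (tauC I i j ω).toNat = m' + 1})ᶜ := by
      ext ω
      simp only [Set.mem_preimage, Set.mem_singleton_iff, Set.mem_compl_iff, Set.mem_iUnion,
        Set.mem_setOf_eq, not_exists]
      constructor
      · intro h m'; omega
      · intro h
        by_contra hc
        exact h ((tauC I i j ω).toNat - 1) (by omega)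
    rw [this]
    exact (MeasurableSet.iUnion fun m' => hsucc m').compl
  · exact hsucc m'

include hmeas hindep hrad hi hj in
lemma integrable_Nreal : Integrable (fun ω => ((tauC I i j ω).toNat : ℝ)) μ := by
  have hmN : Measurable fun ω => ((tauC I i j ω).toNat : ℝ) :=
    measurable_from_top.comp (measurable_Nnat hmeas hindep hrad hi hj)
  refine ⟨hmN.aestronglyMeasurable, ?_⟩
  rw [hasFiniteIntegral_def]
  have hbound : ∀ᵐ ω ∂μ, (‖((tauC I i j ω).toNat : ℝ)‖₊ : ℝ≥0∞)
      ≤ ⨆ n, (Tst I i j n ω : ℝ≥0∞) := by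
    filter_upwards [ae_tau_ne_top hmeas hindep hrad hi hj] with ω hω
    have h1 : Tst I i j ((tauC I i j ω).toNat) ω = (tauC I i j ω).toNat := by
      rw [Tst, min_eq_left (by rw [ENat.coe_toNat hω])]
    calc (‖((tauC I i j ω).toNat : ℝ)‖₊ : ℝ≥0∞) = ((tauC I i j ω).toNat : ℝ≥0∞) := by
          simp
      _ = (Tst I i j ((tauC I i j ω).toNat) ω : ℝ≥0∞) := by rw [h1]
      _ ≤ ⨆ n, (Tst I i j n ω : ℝ≥0∞) := le_iSup (fun n => (Tst I i j n ω : ℝ≥0∞)) _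
  calc ∫⁻ ω, (‖((tauC I i j ω).toNat : ℝ)‖₊ : ℝ≥0∞) ∂μ
      ≤ ∫⁻ ω, ⨆ n, (Tst I i j n ω : ℝ≥0∞) ∂μ := lintegral_mono_ae hbound
    _ ≤ ENNReal.ofReal (4*(i:ℝ)*(j:ℝ)) := lintegral_sup_Tst_le hmeas hindep hrad hi hj
    _ < ⊤ := ENNReal.ofReal_lt_top

end Fin
section Final
variable {Ω : Type*} [MeasurableSpace Ω] {μ : Measure Ω} [IsProbabilityMeasure μ]
  {I : Fin 3 → ℕ → Ω → ℝ}
  (hmeas : ∀ a k, Measurable (I a k))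
  (hindep : iIndepFun
      (fun (p : Fin 3 × ℕ) ω => I p.1 p.2 ω) μ)
  (hrad : ∀ a k, μ {ω | I a k ω = 1} = 1 / 2 ∧ μ {ω | I a k ω = -1} = 1 / 2)
  {i j : ℕ} (hi : 1 ≤ i) (hj : 1 ≤ j)

include hmeas hindep hrad hi hj

lemma ae_W_bound (n : ℕ) :
    ∀ᵐ ω ∂μ, ‖Wp I (Tst I i j n ω) ω‖ ≤ 2 * ((tauC I i j ω).toNat : ℝ) := by
  filter_upwards [ae_pm hmeas hrad, ae_tau_ne_top hmeas hindep hrad hi hj] with ω hg hτ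
  have hT : Tst I i j n ω ≤ (tauC I i j ω).toNat :=
    ENat.toNat_le_toNat (min_le_left _ _) hτ
  rw [Real.norm_eq_abs]
  calc |Wp I (Tst I i j n ω) ω| ≤ 2*(Tst I i j n ω) := good_abs_Wp hg _
    _ ≤ 2 * ((tauC I i j ω).toNat : ℝ) := by
        have : ((Tst I i j n ω : ℕ) : ℝ) ≤ (((tauC I i j ω).toNat : ℕ) : ℝ) := by
          exact_mod_cast hT
        linarith

lemma integrable_Wfinal :
    Integrable (fun ω => Wp I ((tauC I i j ω).toNat) ω) μ := by
  refine Integrable.mono' ((integrable_Nreal hmeas hindep hrad hi hj).const_mul 2)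
    (measurable_comp_nat (fun m => measurable_Wp hmeas m)
      (measurable_Nnat hmeas hindep hrad hi hj)).aestronglyMeasurable ?_
  filter_upwards [ae_pm hmeas hrad, ae_tau_ne_top hmeas hindep hrad hi hj] with ω hg hτ
  rw [Real.norm_eq_abs]
  exact good_abs_Wp hg _

lemma integral_Wfinal : ∫ ω, Wp I ((tauC I i j ω).toNat) ω ∂μ = 0 := by
  have hlim : Filter.Tendsto (fun n => ∫ ω, Wp I (Tst I i j n ω) ω ∂μ)
      Filter.atTop (nhds (∫ ω, Wp I ((tauC I i j ω).toNat) ω ∂μ)) := by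
    refine MeasureTheory.tendsto_integral_of_dominated_convergence
      (fun ω => 2 * ((tauC I i j ω).toNat : ℝ))
      (fun n => (measurable_comp_nat (fun m => measurable_Wp hmeas m)
        (measurable_Tst hmeas i j n)).aestronglyMeasurable)
      ((integrable_Nreal hmeas hindep hrad hi hj).const_mul 2)
      (fun n => ae_W_bound hmeas hindep hrad hi hj n) ?_
    filter_upwards [ae_tau_ne_top hmeas hindep hrad hi hj] with ω hτ
    apply tendsto_atTop_of_eventually_const (i₀ := (tauC I i j ω).toNat)
    intro n hn
    have : Tst I i j n ω = (tauC I i j ω).toNat := by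
      rw [Tst, min_eq_left]
      calc tauC I i j ω = (((tauC I i j ω).toNat : ℕ) : ℕ∞) := (ENat.coe_toNat hτ).symm
        _ ≤ (n : ℕ∞) := by exact_mod_cast hn
    rw [this]
  have hconst : ∀ n, ∫ ω, Wp I (Tst I i j n ω) ω ∂μ = 0 :=
    fun n => integral_SVW hmeas hindep hrad i j n
  simp_rw [hconst] at hlim
  exact (tendsto_nhds_unique tendsto_const_nhds hlim).symm

lemma integral_max_eq :
    ∫ ω, max (dL I i ((tauC I i j ω).toNat) ω) (dR I j ((tauC I i j ω).toNat) ω) ∂μ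
      = 2 * ((i:ℝ) + (j:ℝ)) := by
  have hae : (fun ω => max (dL I i ((tauC I i j ω).toNat) ω) (dR I j ((tauC I i j ω).toNat) ω))
      =ᵐ[μ] fun ω => 2*((i:ℝ)+(j:ℝ)) + Wp I ((tauC I i j ω).toNat) ω := by
    filter_upwards [ae_pm hmeas hrad, ae_tau_ne_top hmeas hindep hrad hi hj] with ω hg hτ
    set m := (tauC I i j ω).toNat with hm
    have hspec := tauOf_spec (fun n => 1 ≤ n ∧ dL I i n ω * dR I j n ω = 0) hτ
    have hprod : dL I i m ω * dR I j m ω = 0 := hspec.1.2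
    have hno : ∀ l, 1 ≤ l → l < m → dL I i l ω * dR I j l ω ≠ 0 :=
      fun l h1 hl heq => hspec.2 l hl ⟨h1, heq⟩
    obtain ⟨hL, hR⟩ := good_nonneg_at hi hj hg m hno
    have hsum : dL I i m ω + dR I j m ω = 2*((i:ℝ)+(j:ℝ)) + Wp I m ω := dL_add_dR I i j m ω
    rcases mul_eq_zero.mp hprod with h0 | h0
    · rw [max_eq_right (by rw [h0]; exact hR), ← hsum, h0, zero_add]
    · rw [max_eq_left (by rw [h0]; exact hL), ← hsum, h0, add_zero]
  rw [integral_congr_ae hae, integral_add (integrable_const _)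
    (integrable_Wfinal hmeas hindep hrad hi hj),
    integral_Wfinal hmeas hindep hrad hi hj, integral_const, add_zero, probReal_univ]
  simp

end Final

/-- **Remark 3.4.**  For three independent simple symmetric random walks
started from `-2i`, `0`, `2j` (`i, j ≥ 1`) built from independent i.i.d.
Rademacher sequences, with `M_n = max (D_n^{(L,M)}, D_n^{(M,R)})` and first
collision time `τ_C`, one has `E[M_{τ_C}] = 2 (i + j)`. -/
theorem expected_max_distance_at_collision
    {Ω : Type*} [MeasurableSpace Ω] {μ : Measure Ω} [IsProbabilityMeasure μ]
    (I : Fin 3 → ℕ → Ω → ℝ)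
    (hmeas : ∀ a k, Measurable (I a k))
    (hindep : iIndepFun
      (fun (p : Fin 3 × ℕ) ω => I p.1 p.2 ω) μ)
    (hrad : ∀ a k, μ {ω | I a k ω = 1} = 1 / 2 ∧ μ {ω | I a k ω = -1} = 1 / 2)
    (i j : ℕ) (hi : 1 ≤ i) (hj : 1 ≤ j) :
    ∫ ω, max (distLM i (I 0) (I 1) (collisionTime i j (I 0) (I 1) (I 2) ω).toNat ω)
             (distMR j (I 1) (I 2) (collisionTime i j (I 0) (I 1) (I 2) ω).toNat ω) ∂μ
      = 2 * ((i : ℝ) + (j : ℝ)) := by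
  have hrw : ∀ ω, max (distLM i (I 0) (I 1) (collisionTime i j (I 0) (I 1) (I 2) ω).toNat ω)
      (distMR j (I 1) (I 2) (collisionTime i j (I 0) (I 1) (I 2) ω).toNat ω)
      = max (dL I i ((tauC I i j ω).toNat) ω) (dR I j ((tauC I i j ω).toNat) ω) := by
    intro ω
    rw [collisionTime_eq, distLM_eq, distMR_eq]
  simp_rw [hrw]
  exact integral_max_eq hmeas hindep hrad hi hj
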